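/- arXiv:2510.01689 — 5 statements merged into one kernel-verified Lean document; each statement's English description precedes it below -/
import Mathlib

section
/- Strong group incentive ratio upper bound for Maximum Nash Welfare: for every coalition size c ≥ 1, the following holds. Let v_1, …, v_n be additive valuations over m divisible goods such that each agent has strictly positive value for at least one good, let C ⊆ [n] with |C| ≤ c, and let v'_C be manipulated additive valuations (each corrupted agent still having strictly positive value for at least one good). Let x be any fractional allocation maximizing Nash welfare for the true profile v, and let x' be any fractional allocation maximizing Nash welfare for the manipulated profile (v'_C, v_{−C}). If v_a(x_a) ≤ v_a(x'_a) for every a ∈ C, then v_a(x'_a) ≤ (c + 1)·v_a(x_a) for every a ∈ C. -/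
/-!
Write `u a = v_a(x_a)` and `w a = v_a(x'_a)`. Since Nash welfare does not decrease along the
segment from `x` towards `x'`, its logarithmic derivative at `x` is nonpositive, which reads
`∑ a, w a / u a ≤ n`; symmetrically `∑ a, v'_a(x_a) / v'_a(x'_a) ≤ n`. Adding the two, the total
gain `∑ a, (w a / u a + v'_a(x_a) / v'_a(x'_a))` is at most `2n`. An honest agent has
`v' a = v a`, so its term is `w/u + u/w ≥ 2`; a corrupted agent has `w ≥ u`, so its term is at
least `1`. Hence the term of a single corrupted agent `b` exceeds `1` by at most `|C|`, and in
particular `w b / u b ≤ |C| + 1`.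
-/

/-- A fractional allocation: nonnegative entries, each good fully allocated. -/
def IsFracAlloc (n m : ℕ) (x : Fin n → Fin m → ℝ) : Prop :=
  (∀ a g, 0 ≤ x a g) ∧ ∀ g, ∑ a, x a g = 1

/-- The value of the bundle `y` under the additive valuation `v`. -/
noncomputable def addVal {m : ℕ} (v y : Fin m → ℝ) : ℝ := ∑ g, v g * y g

/-- `x` is a fractional allocation maximizing Nash welfare for the profile `v`. -/
def IsMNW (n m : ℕ) (v x : Fin n → Fin m → ℝ) : Prop :=
  IsFracAlloc n m x ∧
    ∀ y : Fin n → Fin m → ℝ, IsFracAlloc n m y →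
      (∏ a, addVal (v a) (y a)) ≤ ∏ a, addVal (v a) (x a)

open Finset

theorem HasDerivAt.nonpos_of_isMaxOn_Icc {f : ℝ → ℝ} {D : ℝ} (hf : HasDerivAt f D 0)
    (hmax : IsMaxOn f (Set.Icc 0 1) 0) : D ≤ 0 := by
  have hseg : segment ℝ 0 (0 + 1) ⊆ Set.Icc (0:ℝ) 1 := by
    rw [zero_add, segment_eq_Icc zero_le_one]
  simpa using hmax.localize.hasFDerivWithinAt_nonpos
    hf.hasFDerivAt.hasFDerivWithinAt (mem_posTangentConeAt_of_segment_subset hseg)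

theorem sum_div_le_card_of_isMaxOn_prod_segment {ι : Type*} [Fintype ι] {u w : ι → ℝ}
    (hu : ∀ a, 0 < u a)
    (hmax : IsMaxOn (fun t => ∏ a, ((1 - t) * u a + t * w a)) (Set.Icc 0 1) 0) :
    ∑ a, w a / u a ≤ Fintype.card ι := by
  classical
  have hfactor : ∀ a, HasDerivAt (fun t => (1 - t) * u a + t * w a) (w a - u a) 0 := fun a =>
    ((((hasDerivAt_id' 0).const_sub 1).mul_const (u a)).fun_add
      ((hasDerivAt_id' 0).mul_const (w a))).congr_deriv
      (by simp only [neg_one_mul, one_mul, neg_add_eq_sub])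
  have hderiv := HasDerivAt.fun_finsetProd (u := univ) fun a _ => hfactor a
  have hD : ∑ a, (∏ b ∈ univ.erase a, ((1 - 0) * u b + 0 * w b)) • (w a - u a)
      = (∏ a, u a) * (∑ a, w a / u a - Fintype.card ι) := calc
    _ = ∑ a, (∏ b, u b) * (w a / u a - 1) := sum_congr rfl fun a _ => by
      simp only [sub_zero, one_mul, zero_mul, add_zero, smul_eq_mul]
      rw [← mul_prod_erase univ u (mem_univ a)]
      field_simp [(hu a).ne']
    _ = _ := by rw [← mul_sum, sum_sub_distrib]; simp
  have hnonpos := hderiv.nonpos_of_isMaxOn_Icc hmax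
  rw [hD] at hnonpos
  linarith [nonpos_of_mul_nonpos_right hnonpos (prod_pos fun a _ => hu a)]

theorem two_le_div_add_div {p q : ℝ} (hp : 0 < p) (hq : 0 < q) : 2 ≤ p / q + q / p := by
  rw [div_add_div _ _ hq.ne' hp.ne', le_div_iff₀ (by positivity)]
  nlinarith [sq_nonneg (p - q)]

theorem le_card_add_one_of_sum_le {ι : Type*} [Fintype ι] {C : Finset ι} {f : ι → ℝ}
    (hout : ∀ a ∉ C, 2 ≤ f a) (hin : ∀ a ∈ C, 1 ≤ f a)
    (hsum : ∑ a, f a ≤ 2 * Fintype.card ι) {b : ι} (hb : b ∈ C) :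
    f b ≤ C.card + 1 := by
  classical
  set excess : ι → ℝ := fun a => f a - 2 + if a ∈ C then 1 else 0
  have hexcess : ∀ a, 0 ≤ excess a := fun a => by
    by_cases ha : a ∈ C
    · simp only [excess, ha, if_true]; linarith [hin a ha]
    · simp only [excess, ha, if_false]; linarith [hout a ha]
  have htotal : ∑ a, excess a = ∑ a, f a - 2 * Fintype.card ι + C.card := by
    simp [excess, sum_add_distrib, sum_sub_distrib, mul_comm]
  have := single_le_sum (fun a _ => hexcess a) (mem_univ b)
  simp only [excess, hb, if_true] at this
  linarith

theorem addVal_nonneg {m : ℕ} {v y : Fin m → ℝ} (hv : ∀ g, 0 ≤ v g) (hy : ∀ g, 0 ≤ y g) :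
    0 ≤ addVal v y :=
  sum_nonneg fun g _ => mul_nonneg (hv g) (hy g)

theorem addVal_segment {m : ℕ} (v y z : Fin m → ℝ) (t : ℝ) :
    addVal v (fun g => (1 - t) * y g + t * z g) = (1 - t) * addVal v y + t * addVal v z := by
  simp only [addVal, mul_sum, ← sum_add_distrib]
  exact sum_congr rfl fun g _ => by ring

theorem IsFracAlloc.segment {n m : ℕ} {x y : Fin n → Fin m → ℝ} (hx : IsFracAlloc n m x)
    (hy : IsFracAlloc n m y) {t : ℝ} (ht : t ∈ Set.Icc 0 1) :
    IsFracAlloc n m (fun a g => (1 - t) * x a g + t * y a g) := by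
  obtain ⟨ht0, ht1⟩ := ht
  refine ⟨fun a g => ?_, fun g => ?_⟩
  · have := hx.1 a g
    have := hy.1 a g
    have : 0 ≤ 1 - t := by linarith
    positivity
  · rw [sum_add_distrib, ← mul_sum, ← mul_sum, hx.2 g, hy.2 g]
    ring

theorem IsFracAlloc.uniform (n m : ℕ) [NeZero n] : IsFracAlloc n m (fun _ _ => (n : ℝ)⁻¹) :=
  ⟨fun _ _ => by positivity, fun _ => by simp⟩

theorem IsMNW.addVal_pos {n m : ℕ} {v x : Fin n → Fin m → ℝ} (hx : IsMNW n m v x)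
    (hv : ∀ a g, 0 ≤ v a g) (hpos : ∀ a, ∃ g, 0 < v a g) (a : Fin n) :
    0 < addVal (v a) (x a) := by
  have : NeZero n := ⟨a.pos.ne'⟩
  have huniform : ∀ b, 0 < addVal (v b) (fun _ => (n : ℝ)⁻¹) := fun b => by
    obtain ⟨g, hg⟩ := hpos b
    simp only [addVal, ← sum_mul]
    exact mul_pos (sum_pos' (fun g _ => hv b g) ⟨g, mem_univ g, hg⟩)
      (inv_pos.mpr (Nat.cast_pos.mpr a.pos))
  have hprod : 0 < ∏ b, addVal (v b) (x b) :=
    (prod_pos fun b _ => huniform b).trans_le (hx.2 _ (IsFracAlloc.uniform n m))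
  refine (addVal_nonneg (hv a) (hx.1.1 a)).lt_of_ne fun h => hprod.ne' ?_
  exact prod_eq_zero (mem_univ a) h.symm

theorem IsMNW.sum_div_le {n m : ℕ} {v x y : Fin n → Fin m → ℝ} (hx : IsMNW n m v x)
    (hy : IsFracAlloc n m y) (hu : ∀ a, 0 < addVal (v a) (x a)) :
    ∑ a, addVal (v a) (y a) / addVal (v a) (x a) ≤ n := by
  simpa using sum_div_le_card_of_isMaxOn_prod_segment hu fun t ht => by
    simpa [addVal_segment] using hx.2 _ (hx.1.segment hy ht)

theorem stmt1_general (c : ℕ) (n m : ℕ)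
    (v v' : Fin n → Fin m → ℝ)
    (hv : ∀ a g, 0 ≤ v a g) (hv' : ∀ a g, 0 ≤ v' a g)
    (hpos : ∀ a, ∃ g, 0 < v a g) (hpos' : ∀ a, ∃ g, 0 < v' a g)
    (C : Finset (Fin n)) (hC : C.card ≤ c)
    (hhonest : ∀ a ∉ C, v' a = v a)
    (x x' : Fin n → Fin m → ℝ)
    (hx : IsMNW n m v x) (hx' : IsMNW n m v' x')
    (hbetter : ∀ a ∈ C, addVal (v a) (x a) ≤ addVal (v a) (x' a)) :
    ∀ a ∈ C, addVal (v a) (x' a) ≤ ((c : ℝ) + 1) * addVal (v a) (x a) := by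
  intro b hb
  have hu := hx.addVal_pos hv hpos
  have hu' := hx'.addVal_pos hv' hpos'
  set gain : Fin n → ℝ := fun a =>
    addVal (v a) (x' a) / addVal (v a) (x a) + addVal (v' a) (x a) / addVal (v' a) (x' a)
  have hsum : ∑ a, gain a ≤ 2 * Fintype.card (Fin n) := by
    simp only [gain, sum_add_distrib, Fintype.card_fin]
    linarith [hx.sum_div_le hx'.1 hu, hx'.sum_div_le hx.1 hu']
  have hhonest_gain : ∀ a ∉ C, 2 ≤ gain a := fun a ha => by
    have hw := hu' a
    simp only [gain, hhonest a ha] at hw ⊢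
    exact two_le_div_add_div hw (hu a)
  have hown_le_gain : ∀ a, addVal (v a) (x' a) / addVal (v a) (x a) ≤ gain a := fun a =>
    le_add_of_nonneg_right (div_nonneg (addVal_nonneg (hv' a) (hx.1.1 a)) (hu' a).le)
  have hcorrupt_gain : ∀ a ∈ C, 1 ≤ gain a := fun a ha =>
    ((one_le_div (hu a)).mpr (hbetter a ha)).trans (hown_le_gain a)
  rw [← div_le_iff₀ (hu b)]
  calc _ ≤ gain b := hown_le_gain b
    _ ≤ C.card + 1 := le_card_add_one_of_sum_le hhonest_gain hcorrupt_gain hsum hb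
    _ ≤ c + 1 := by gcongr

/-- SGIR upper bound `c + 1` for Maximum Nash Welfare. -/
theorem stmt1 (c : ℕ) (hc : 1 ≤ c) (n m : ℕ)
    (v v' : Fin n → Fin m → ℝ)
    (hv : ∀ a g, 0 ≤ v a g) (hv' : ∀ a g, 0 ≤ v' a g)
    (hpos : ∀ a, ∃ g, 0 < v a g) (hpos' : ∀ a, ∃ g, 0 < v' a g)
    (C : Finset (Fin n)) (hC : C.card ≤ c)
    (hhonest : ∀ a ∉ C, v' a = v a)
    (x x' : Fin n → Fin m → ℝ)
    (hx : IsMNW n m v x) (hx' : IsMNW n m v' x')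
    (hbetter : ∀ a ∈ C, addVal (v a) (x a) ≤ addVal (v a) (x' a)) :
    ∀ a ∈ C, addVal (v a) (x' a) ≤ ((c : ℝ) + 1) * addVal (v a) (x a) :=
  stmt1_general c n m v v' hv hv' hpos hpos' C hC hhonest x x' hx hx' hbetter
end

section
/- Group incentive ratio lower bound for Maximum Nash Welfare: for every coalition size c ≥ 1 and every ε > 0, there exist a number of agents n, a number of divisible goods m, additive valuations v_1, …, v_n (each agent having strictly positive value for at least one good), a coalition C ⊆ [n] with |C| = c, manipulated additive valuations v'_C, a fractional allocation x maximizing Nash welfare for the true profile v, and a fractional allocation x' maximizing Nash welfare for the manipulated profile (v'_C, v_{−C}), such that v_a(x_a) > 0 and v_a(x'_a) ≥ (2 − ε)·v_a(x_a) for every a ∈ C. -/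
set_option maxHeartbeats 1000000


lemma amgm {n : ℕ} (z : Fin n → ℝ) (hz : ∀ a, 0 ≤ z a) (μ : ℝ)
    (hsum : ∑ a, z a ≤ n * μ) : ∏ a, z a ≤ μ ^ n := by
  rcases Nat.eq_zero_or_pos n with h | h
  · subst h; simp
  have hn : (0:ℝ) < n := by exact_mod_cast h
  have key := Real.geom_mean_le_arith_mean_weighted Finset.univ (fun _ => (n:ℝ)⁻¹) z
    (fun _ _ => by positivity) (by simp [Finset.card_univ]; field_simp) (fun i _ => hz i)
  have h1 : ∑ a : Fin n, (n:ℝ)⁻¹ * z a ≤ μ := by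
    rw [← Finset.mul_sum]
    rw [inv_mul_le_iff₀ hn]
    linarith [hsum]
  have h2 : (∏ a, z a ^ ((n:ℝ)⁻¹)) ^ n ≤ μ ^ n :=
    pow_le_pow_left₀ (Finset.prod_nonneg fun a _ => Real.rpow_nonneg (hz a) _) (key.trans h1) n
  calc ∏ a, z a = (∏ a, z a ^ ((n:ℝ)⁻¹)) ^ n := by
        rw [← Finset.prod_pow]
        refine Finset.prod_congr rfl fun a _ => ?_
        rw [← Real.rpow_natCast (z a ^ ((n:ℝ)⁻¹)), ← Real.rpow_mul (hz a),
          inv_mul_cancel₀ (ne_of_gt hn), Real.rpow_one]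
    _ ≤ μ ^ n := h2

lemma mnw_of {n m : ℕ} (v x : Fin n → Fin m → ℝ) (μ : ℝ)
    (hv : ∀ a g, 0 ≤ v a g) (hx : IsFracAlloc n m x)
    (hxa : ∀ a, addVal (v a) (x a) = μ)
    (w : Fin m → ℝ) (hw : ∀ a g, v a g ≤ w g) (hwsum : ∑ g, w g ≤ n * μ) :
    IsMNW n m v x := by
  refine ⟨hx, fun y hy => ?_⟩
  have hz : ∀ a, 0 ≤ addVal (v a) (y a) := fun a =>
    Finset.sum_nonneg fun g _ => mul_nonneg (hv a g) (hy.1 a g)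
  have hsum : ∑ a, addVal (v a) (y a) ≤ n * μ := by
    have e : ∑ a, addVal (v a) (y a) = ∑ g, ∑ a, v a g * y a g := by
      simp only [addVal]; rw [Finset.sum_comm]
    rw [e]
    refine le_trans (Finset.sum_le_sum fun g _ => ?_) hwsum
    calc ∑ a, v a g * y a g ≤ ∑ a, w g * y a g :=
          Finset.sum_le_sum fun a _ => mul_le_mul_of_nonneg_right (hw a g) (hy.1 a g)
      _ = w g := by rw [← Finset.mul_sum, hy.2 g, mul_one]
  calc ∏ a, addVal (v a) (y a) ≤ μ ^ n := amgm _ hz μ hsum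
    _ = ∏ a, addVal (v a) (x a) := by simp [hxa]

/-- GIR lower bound `2` for Maximum Nash Welfare. -/
theorem stmt4 (c : ℕ) (hc : 1 ≤ c) (ε : ℝ) (hε : 0 < ε) :
    ∃ (n m : ℕ) (v v' : Fin n → Fin m → ℝ) (C : Finset (Fin n))
      (x x' : Fin n → Fin m → ℝ),
      (∀ a g, 0 ≤ v a g) ∧ (∀ a g, 0 ≤ v' a g) ∧
      (∀ a, ∃ g, 0 < v a g) ∧
      C.card = c ∧ (∀ a ∉ C, v' a = v a) ∧
      IsMNW n m v x ∧ IsMNW n m v' x' ∧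
      ∀ a ∈ C, 0 < addVal (v a) (x a) ∧
        (2 - ε) * addVal (v a) (x a) ≤ addVal (v a) (x' a) := by
  classical
  set M : ℕ := ⌈2/ε⌉₊ with hMdef
  have hM1 : 1 ≤ M := Nat.one_le_ceil_iff.2 (by positivity)
  set K : ℕ := c * M with hKdef
  have hK1 : 1 ≤ K := Nat.one_le_iff_ne_zero.2 (by positivity)
  set n : ℕ := c + K with hndef
  have hcn : c ≤ n := Nat.le_add_right _ _
  have hKpos : (0:ℝ) < K := by exact_mod_cast hK1
  have hnpos : (0:ℝ) < (c:ℝ) + K := by positivity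
  have hnr : (n:ℝ) = (c:ℝ) + K := by rw [hndef]; push_cast; ring
  set δ : ℝ := min ε 1 / 2 with hδdef
  have hδ0 : 0 < δ := by positivity
  have hδ1 : δ ≤ 1/2 := by
    rw [hδdef]; have := min_le_right ε (1:ℝ); linarith
  have hδε : δ ≤ ε/2 := by
    rw [hδdef]; have := min_le_left ε (1:ℝ); linarith
  set μ : ℝ := ((c:ℝ)*δ + K)/((c:ℝ)+K) with hμdef
  have hμδ : δ ≤ μ := by
    rw [hμdef, le_div_iff₀ hnpos]; nlinarith
  have hμ0 : 0 < μ := lt_of_lt_of_le hδ0 hμδ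
  have hμ1 : μ ≤ 1 := by
    rw [hμdef, div_le_one hnpos]; nlinarith
  set t : ℝ := (μ - δ)/K with htdef
  have ht0 : 0 ≤ t := div_nonneg (by linarith) hKpos.le
  have hKt : (K:ℝ) * t = μ - δ := by
    rw [htdef]; field_simp
  have hct : (c:ℝ) * t + μ = 1 := by
    rw [htdef, hμdef]; field_simp; ring
  have h2cK : 2*(c:ℝ) ≤ ε * K := by
    have hMc : (2/ε) ≤ (M:ℝ) := Nat.le_ceil _
    have hKr : (K:ℝ) = c * M := by exact_mod_cast hKdef
    rw [hKr]
    calc 2*(c:ℝ) = (2/ε) * c * ε := by field_simp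
      _ ≤ (M:ℝ) * c * ε := by
          have hc0 : (0:ℝ) ≤ (c:ℝ) := Nat.cast_nonneg _
          have := mul_le_mul_of_nonneg_right (mul_le_mul_of_nonneg_right hMc hc0) hε.le
          linarith
      _ = ε * ((c:ℝ) * M) := by ring
  -- cardinalities
  have hcard : (Finset.univ.filter fun a : Fin n => (a:ℕ) < c).card = c := by
    have e : (Finset.univ.filter fun a : Fin n => (a:ℕ) < c) =
        Finset.map (Fin.castLEEmb hcn) Finset.univ := by
      ext a
      simp only [Finset.mem_filter, Finset.mem_univ, true_and, Finset.mem_map,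
        Fin.castLEEmb_apply]
      constructor
      · intro h; exact ⟨⟨a, h⟩, by apply Fin.ext; rfl⟩
      · rintro ⟨b, rfl⟩; exact b.2
    rw [e, Finset.card_map, Finset.card_univ, Fintype.card_fin]
  have hcard2 : (Finset.univ.filter fun a : Fin n => ¬ (a:ℕ) < c).card = K := by
    have h := Finset.card_filter_add_card_filter_not
      (s := (Finset.univ : Finset (Fin n))) (p := fun a : Fin n => (a:ℕ) < c)
    simp only [Finset.card_univ, Fintype.card_fin, hcard] at h
    omega
  -- summation helpers
  have hsumlt : ∀ (r : ℝ), (∑ g : Fin n, if (g:ℕ) < c then r else 0) = c * r := by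
    intro r
    rw [← Finset.sum_filter, Finset.sum_const, hcard, nsmul_eq_mul]
  have hsumge : ∀ (r : ℝ), (∑ g : Fin n, if ¬ (g:ℕ) < c then r else 0) = K * r := by
    intro r
    rw [← Finset.sum_filter, Finset.sum_const, hcard2, nsmul_eq_mul]
  have hsumeq : ∀ (a : Fin n) (r : ℝ), (∑ g : Fin n, if (a:ℕ) = (g:ℕ) then r else 0) = r := by
    intro a r
    simp [Fin.val_eq_val]
  have hsumeq' : ∀ (g : Fin n) (r : ℝ), (∑ a : Fin n, if (a:ℕ) = (g:ℕ) then r else 0) = r := by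
    intro g r
    simp [Fin.val_eq_val]
  -- the data
  set v : Fin n → Fin n → ℝ :=
    (fun a g => if (a:ℕ) = (g:ℕ) ∨ ((a:ℕ) < c ∧ ¬ (g:ℕ) < c) then 1 else 0) with hvdef
  set v' : Fin n → Fin n → ℝ :=
    (fun a g => if (a:ℕ) = (g:ℕ) ∧ (a:ℕ) < c then δ else
      if (a:ℕ) = (g:ℕ) ∨ ((a:ℕ) < c ∧ ¬ (g:ℕ) < c) then 1 else 0) with hv'def
  set x : Fin n → Fin n → ℝ := (fun a g => if (a:ℕ) = (g:ℕ) then 1 else 0) with hxdef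
  set x' : Fin n → Fin n → ℝ :=
    (fun a g => if (a:ℕ) = (g:ℕ) then (if (a:ℕ) < c then 1 else μ) else
      if (a:ℕ) < c ∧ ¬ (g:ℕ) < c then t else 0) with hx'def
  -- value computations
  have hvnn : ∀ a g, 0 ≤ v a g := by
    intro a g; rw [hvdef]; dsimp only; split_ifs <;> norm_num
  have hv'nn : ∀ a g, 0 ≤ v' a g := by
    intro a g; rw [hv'def]; dsimp only; split_ifs <;> (first | (exfalso; omega) | linarith | norm_num)
  have hvx1 : ∀ a : Fin n, addVal (v a) (x a) = 1 := by
    intro a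
    have e : ∀ g ∈ Finset.univ, v a g * x a g = (if (a:ℕ) = (g:ℕ) then (1:ℝ) else 0) := by
      intro g _; rw [hvdef, hxdef]; dsimp only
      split_ifs <;> (first | (exfalso; omega) | linarith | norm_num)
    exact Eq.trans (Finset.sum_congr rfl e) (hsumeq a 1)
  have hxalloc : IsFracAlloc n n x := by
    refine ⟨fun a g => by rw [hxdef]; dsimp only; split_ifs <;> norm_num, fun g => ?_⟩
    have e : ∀ a ∈ Finset.univ, x a g = (if (a:ℕ) = (g:ℕ) then (1:ℝ) else 0) := by
      intro a _; rw [hxdef]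
    exact Eq.trans (Finset.sum_congr rfl e) (hsumeq' g 1)
  have hx'alloc : IsFracAlloc n n x' := by
    refine ⟨fun a g => by rw [hx'def]; dsimp only; split_ifs <;> (first | (exfalso; omega) | linarith | norm_num),
      fun g => ?_⟩
    by_cases hg : (g:ℕ) < c
    · have e : ∀ a ∈ Finset.univ, x' a g = (if (a:ℕ) = (g:ℕ) then (1:ℝ) else 0) := by
        intro a _; rw [hx'def]; dsimp only
        split_ifs <;> (first | (exfalso; omega) | linarith | norm_num)
      exact Eq.trans (Finset.sum_congr rfl e) (hsumeq' g 1)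
    · have e : ∀ a ∈ Finset.univ, x' a g =
          (if (a:ℕ) = (g:ℕ) then μ else 0) + (if (a:ℕ) < c then t else 0) := by
        intro a _; rw [hx'def]; dsimp only
        split_ifs <;> (first | (exfalso; omega) | linarith | norm_num)
      refine Eq.trans (Finset.sum_congr rfl e) ?_
      rw [Finset.sum_add_distrib, hsumeq' g μ, hsumlt t]
      linarith [hct]
  have hv'x'μ : ∀ a : Fin n, addVal (v' a) (x' a) = μ := by
    intro a
    by_cases ha : (a:ℕ) < c
    · have e : ∀ g ∈ Finset.univ, v' a g * x' a g =
          (if (a:ℕ) = (g:ℕ) then δ else 0) + (if ¬ (g:ℕ) < c then t else 0) := by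
        intro g _; rw [hv'def, hx'def]; dsimp only
        split_ifs <;> (first | (exfalso; omega) | linarith | norm_num)
      refine Eq.trans (Finset.sum_congr rfl e) ?_
      rw [Finset.sum_add_distrib, hsumeq a δ, hsumge t]
      linarith [hKt]
    · have e : ∀ g ∈ Finset.univ, v' a g * x' a g =
          (if (a:ℕ) = (g:ℕ) then μ else 0) := by
        intro g _; rw [hv'def, hx'def]; dsimp only
        split_ifs <;> (first | (exfalso; omega) | linarith | norm_num)
      exact Eq.trans (Finset.sum_congr rfl e) (hsumeq a μ)
  have hvx'gain : ∀ a : Fin n, (a:ℕ) < c → addVal (v a) (x' a) = 1 + (K:ℝ) * t := by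
    intro a ha
    have e : ∀ g ∈ Finset.univ, v a g * x' a g =
        (if (a:ℕ) = (g:ℕ) then (1:ℝ) else 0) + (if ¬ (g:ℕ) < c then t else 0) := by
      intro g _; rw [hvdef, hx'def]; dsimp only
      split_ifs <;> (first | (exfalso; omega) | linarith | norm_num)
    refine Eq.trans (Finset.sum_congr rfl e) ?_
    rw [Finset.sum_add_distrib, hsumeq a 1, hsumge t]
  refine ⟨n, n, v, v', Finset.univ.filter (fun a : Fin n => (a:ℕ) < c), x, x',
    hvnn, hv'nn, ?_, hcard, ?_, ?_, ?_, ?_⟩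
  · intro a
    refine ⟨a, ?_⟩
    rw [hvdef]; dsimp only; simp
  · intro a ha
    simp only [Finset.mem_filter, Finset.mem_univ, true_and] at ha
    funext g
    rw [hvdef, hv'def]; dsimp only
    simp only [ha, and_false, if_false]
  · -- IsMNW truthful
    refine mnw_of v x 1 hvnn hxalloc hvx1 (fun _ => 1) ?_ (by simp)
    intro a g; rw [hvdef]; dsimp only; split_ifs <;> norm_num
  · -- IsMNW manipulated
    refine mnw_of v' x' μ hv'nn hx'alloc hv'x'μ
      (fun g => if (g:ℕ) < c then δ else 1) ?_ ?_
    · intro a g; rw [hv'def]; dsimp only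
      split_ifs <;> (first | (exfalso; omega) | linarith | norm_num)
    · have e : ∀ g ∈ (Finset.univ : Finset (Fin n)), (if (g:ℕ) < c then δ else (1:ℝ)) =
          (if (g:ℕ) < c then δ else 0) + (if ¬ (g:ℕ) < c then 1 else 0) := by
        intro g _; split_ifs <;> norm_num
      refine le_of_eq (Eq.trans (Finset.sum_congr rfl e) ?_)
      rw [Finset.sum_add_distrib, hsumlt δ, hsumge 1, hnr, hμdef]
      field_simp
  · intro a ha
    simp only [Finset.mem_filter, Finset.mem_univ, true_and] at ha
    rw [hvx1 a, hvx'gain a ha]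
    refine ⟨one_pos, ?_⟩
    have h2 : (1 - ε + δ) * ((c:ℝ) + K) ≤ (c:ℝ)*δ + K := by nlinarith
    have h3 : 1 - ε + δ ≤ μ := by rw [hμdef, le_div_iff₀ hnpos]; exact h2
    rw [hKt]
    linarith
end

section
/- Let v : ℝ_{≥0}^m → ℝ_{≥0} be a CES valuation, let p ∈ ℝ_{≥0}^m be a price vector, and let x ∈ D(p) be a bundle maximizing v subject to the unit-budget constraint p·x ≤ 1. Then there exists r ∈ [0, v(x)] such that for every bundle x' ∈ ℝ_{≥0}^m, r·Σ_{g=1}^m p_g (x_g − x'_g) ≤ v(x) − v(x'). -/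
/-- `y` is an optimal bundle for valuation `v` at prices `p` under unit budget. -/
def InDemand (m : ℕ) (v : (Fin m → ℝ) → ℝ) (p y : Fin m → ℝ) : Prop :=
  (∀ g, 0 ≤ y g) ∧ (∑ g, p g * y g) ≤ 1 ∧
    ∀ z : Fin m → ℝ, (∀ g, 0 ≤ z g) → (∑ g, p g * z g) ≤ 1 → v z ≤ v y

/-- Market equilibrium with unit budgets in the Fisher market. -/
def IsMarketEq (n m : ℕ) (v : Fin n → (Fin m → ℝ) → ℝ)
    (x : Fin n → Fin m → ℝ) (p : Fin m → ℝ) : Prop :=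
  (∀ a g, 0 ≤ x a g) ∧ (∀ g, 0 ≤ p g) ∧ (∀ g, ∑ a, x a g = 1) ∧
    (∀ a, ∑ g, p g * x a g = 1) ∧ ∀ a, InDemand m (v a) p (x a)

/-- Constant Elasticity of Substitution valuations (on nonnegative bundles). -/
def IsCES (m : ℕ) (v : (Fin m → ℝ) → ℝ) : Prop :=
  ∃ (ρ : ℝ) (u : Fin m → ℝ), ρ < 1 ∧ ρ ≠ 0 ∧ (∀ g, 0 ≤ u g) ∧
    ∀ y : Fin m → ℝ, (∀ g, 0 ≤ y g) → v y = (∑ g, u g * y g ^ ρ) ^ (1 / ρ)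

/-- for a CES valuation and an optimal bundle `x` under prices `p`
and unit budget, there is `r ∈ [0, v(x)]` with
`r·Σ_g p_g (x_g − x'_g) ≤ v(x) − v(x')` for every bundle `x'`. -/
theorem stmt7 (m : ℕ) (v : (Fin m → ℝ) → ℝ) (hv : IsCES m v)
    (p : Fin m → ℝ) (hp : ∀ g, 0 ≤ p g)
    (x : Fin m → ℝ) (hx : InDemand m v p x) :
    ∃ r : ℝ, 0 ≤ r ∧ r ≤ v x ∧
      ∀ x' : Fin m → ℝ, (∀ g, 0 ≤ x' g) →
        r * ∑ g, p g * (x g - x' g) ≤ v x - v x' := by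
  obtain ⟨ρ, u, hρ1, hρ0, hu, hvf⟩ := hv
  obtain ⟨hx0, hxb, hxopt⟩ := hx
  have hvnn : ∀ z : Fin m → ℝ, (∀ g, 0 ≤ z g) → 0 ≤ v z := by
    intro z hz
    rw [hvf z hz]
    exact Real.rpow_nonneg (Finset.sum_nonneg fun g _ =>
      mul_nonneg (hu g) (Real.rpow_nonneg (hz g) ρ)) _
  have hhom : ∀ (t : ℝ) (z : Fin m → ℝ), 0 ≤ t → (∀ g, 0 ≤ z g) →
      v (fun g => t * z g) = t * v z := by
    intro t z ht hz
    rw [hvf _ (fun g => mul_nonneg ht (hz g)), hvf z hz]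
    have h1 : ∀ g ∈ Finset.univ, u g * (t * z g) ^ ρ = t ^ ρ * (u g * z g ^ ρ) := by
      intro g _
      rw [Real.mul_rpow ht (hz g)]; ring
    rw [Finset.sum_congr rfl h1, ← Finset.mul_sum,
      Real.mul_rpow (Real.rpow_nonneg ht ρ)
        (Finset.sum_nonneg fun g _ => mul_nonneg (hu g) (Real.rpow_nonneg (hz g) ρ)),
      ← Real.rpow_mul ht, mul_one_div_cancel hρ0, Real.rpow_one]
  have hkey : ∀ x' : Fin m → ℝ, (∀ g, 0 ≤ x' g) →
      v x' ≤ (∑ g, p g * x' g) * v x := by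
    intro x' hx'
    set b := ∑ g, p g * x' g with hb
    have hbnn : 0 ≤ b := Finset.sum_nonneg fun g _ => mul_nonneg (hp g) (hx' g)
    rcases eq_or_lt_of_le hbnn with h0 | hpos
    · have hb0 : b = 0 := h0.symm
      have ht : ∀ t : ℝ, 0 ≤ t → t * v x' ≤ v x := by
        intro t ht0
        have hbt : ∑ g, p g * (t * x' g) ≤ 1 := by
          have : ∑ g, p g * (t * x' g) = t * b := by
            rw [hb, Finset.mul_sum]
            exact Finset.sum_congr rfl fun g _ => by ring
          rw [this, hb0, mul_zero]; norm_num
        have := hxopt (fun g => t * x' g) (fun g => mul_nonneg ht0 (hx' g)) hbt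
        rwa [hhom t x' ht0 hx'] at this
      have hvle : v x' ≤ 0 := by
        by_contra hc
        push_neg at hc
        have h2 := ht ((v x + 1) / v x') (div_nonneg (by linarith [hvnn x hx0]) hc.le)
        rw [div_mul_cancel₀ _ (ne_of_gt hc)] at h2
        linarith
      rw [hb0, zero_mul]; exact hvle
    · have hz : ∀ g, 0 ≤ b⁻¹ * x' g := fun g => mul_nonneg (inv_nonneg.2 hbnn) (hx' g)
      have hbud : ∑ g, p g * (b⁻¹ * x' g) ≤ 1 := by
        have : ∑ g, p g * (b⁻¹ * x' g) = b⁻¹ * b := by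
          rw [Finset.mul_sum]
          exact Finset.sum_congr rfl fun g _ => by ring
        rw [this, inv_mul_cancel₀ (ne_of_gt hpos)]
      have hle := hxopt _ hz hbud
      rw [hhom b⁻¹ x' (inv_nonneg.2 hbnn) hx'] at hle
      calc v x' = b * (b⁻¹ * v x') := by
            field_simp
        _ ≤ b * v x := by
            exact mul_le_mul_of_nonneg_left hle hbnn
  refine ⟨v x, hvnn x hx0, le_refl _, ?_⟩
  intro x' hx'
  have h1 := hkey x' hx'
  have h2 : ∑ g, p g * (x g - x' g) = (∑ g, p g * x g) - ∑ g, p g * x' g := by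
    rw [← Finset.sum_sub_distrib]
    exact Finset.sum_congr rfl fun g _ => by ring
  rw [h2]
  have hvx : 0 ≤ v x := hvnn x hx0
  have h3 : v x * (∑ g, p g * x g) ≤ v x * 1 := mul_le_mul_of_nonneg_left hxb hvx
  nlinarith [h1, h3]
end

section
/- Equivalence of Probabilistic Serial and Round-Robin on the lifted instance: let ≻ be a profile of strict orderings of n agents over m divisible goods. Set T = (n!)^m, and for each good g let G(g) = {g_1, …, g_T} be T indivisible copies of g, with G = ∪_{g=1}^m G(g). Let ≻' be the profile of strict orderings over G defined by: g_k ≻'_a g'_{k'} if and only if g ≻_a g', or g = g' and k < k'. Let A = RR(≻') be the Round-Robin allocation of the mT indivisible goods in G (note n divides mT). Then for every agent a ∈ [n] and every good g ∈ [m], PS_{a,g}(≻) = |A_a ∩ G(g)| / T. -/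
/-- A strict total ordering over goods, given as a list from most preferred to
least preferred: it must be a duplicate-free enumeration of all goods. -/
def IsOrder {γ : Type*} [Fintype γ] (l : List γ) : Prop :=
  l.Nodup ∧ ∀ g : γ, g ∈ l

/-- An additive valuation `v` (given by its values on single goods) is consistent
with the strict ordering `l` if strictly more valuable goods appear earlier. -/
def Consistent {γ : Type*} [DecidableEq γ] (v : γ → ℝ) (l : List γ) : Prop :=
  ∀ g g' : γ, v g > v g' → l.idxOf g < l.idxOf g'

/-- State of Round-Robin after `s` stages: the set of remaining goods, together
with the bundle picked so far by each agent.  At stage `s` (0-indexed), agent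
`s % n` picks his most preferred remaining good. -/
def rrState {γ : Type*} [DecidableEq γ] [Fintype γ] (n : ℕ) (hn : 0 < n)
    (pref : Fin n → List γ) : ℕ → Finset γ × (Fin n → Finset γ)
  | 0 => (Finset.univ, fun _ => ∅)
  | s + 1 =>
    let st := rrState n hn pref s
    let agent : Fin n := ⟨s % n, Nat.mod_lt s hn⟩
    match (pref agent).find? (fun g => decide (g ∈ st.1)) with
    | none => st
    | some g => (st.1.erase g, Function.update st.2 agent (insert g (st.2 agent)))

/-- The Round-Robin allocation: the bundle of agent `a` after all goods are picked. -/
def rr {γ : Type*} [DecidableEq γ] [Fintype γ] (n : ℕ) (hn : 0 < n)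
    (pref : Fin n → List γ) (a : Fin n) : Finset γ :=
  (rrState n hn pref (Fintype.card γ)).2 a

/-- Agent `a`'s most preferred good in the set `S` of available goods. -/
def psTop {n m : ℕ} (pref : Fin n → List (Fin m)) (S : Finset (Fin m)) (a : Fin n) :
    Option (Fin m) :=
  (pref a).find? (fun g => decide (g ∈ S))

/-- `N(g, S)`: the set of agents whose most preferred available good is `g`. -/
def psN {n m : ℕ} (pref : Fin n → List (Fin m)) (S : Finset (Fin m)) (g : Fin m) :
    Finset (Fin n) :=
  Finset.univ.filter (fun a => psTop pref S a = some g)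

/-- The available goods currently being eaten by at least one agent. -/
def psActive {n m : ℕ} (pref : Fin n → List (Fin m)) (S : Finset (Fin m)) :
    Finset (Fin m) :=
  S.filter (fun g => (psN pref S g).Nonempty)

open scoped Classical in
/-- Combinatorial implementation of Probabilistic Serial.
`psState pref k = (S⁽ᵏ⁾, x⁽ᵏ⁾, t⁽ᵏ⁾)`: after step `k`, the set of available
goods, the partial allocation, and the length `t⁽ᵏ⁾` of step `k` (with `t⁽⁰⁾ = 0`). -/
noncomputable def psState {n m : ℕ} (pref : Fin n → List (Fin m)) :
    ℕ → Finset (Fin m) × (Fin n → Fin m → ℝ) × ℝ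
  | 0 => (Finset.univ, fun _ _ => 0, 0)
  | k + 1 =>
    let st := psState pref k
    let tg : Fin m → ℝ := fun g => (1 - ∑ a, st.2.1 a g) / ((psN pref st.1 g).card : ℝ)
    if h : (psActive pref st.1).Nonempty then
      let t := (psActive pref st.1).inf' h tg
      (st.1.filter (fun g => ¬(g ∈ psActive pref st.1 ∧ tg g = t)),
        fun a g => if psTop pref st.1 a = some g then st.2.1 a g + t else st.2.1 a g,
        t)
    else st

/-- The fractional allocation output by Probabilistic Serial (the mechanism
terminates after at most `m` steps, since each step fully consumes a good). -/
noncomputable def psAlloc {n m : ℕ} (pref : Fin n → List (Fin m)) :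
    Fin n → Fin m → ℝ :=
  (psState pref m).2.1

/-- The lifted ordering over `T` indivisible copies of each of the `m` goods:
copies of a more preferred good come first, and copies of the same good are
ordered by increasing copy index. -/
def liftList {m : ℕ} (T : ℕ) (l : List (Fin m)) : List (Fin m × Fin T) :=
  l.flatMap fun g => (List.finRange T).map fun k => (g, k)

/-!
With `T = (n!)^m` copies of each good, a step of Probabilistic Serial of length `t` is simulated
by `q = t T` full rounds of Round-Robin on the copies: while PS eats, every agent's favourite
available good stays fixed, and in Round-Robin every agent keeps taking the lowest-indexed copy
of that good that is left. `q` is an integer because, while `s` goods remain, the number of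
copies left of each of them is divisible by `(n!)^s`: the good that runs out first, with `c`
copies taken and `d ≤ n` eaters, gives `q = (T - c) / d`, a multiple of `(n!)^(s-1)`, and the
step removes at least one good.
-/

open Finset

theorem List.find?_eq_some_of_imp {α : Type*} {p q : α → Bool} {l : List α} {x : α}
    (h : l.find? p = some x) (hx : q x) (hqp : ∀ y, q y → p y) : l.find? q = some x := by
  rw [List.find?_eq_some_iff_append] at h ⊢
  obtain ⟨-, as, bs, rfl, has⟩ := h
  refine ⟨hx, as, bs, rfl, fun a ha => ?_⟩
  have := has a ha
  cases hq : q a <;> simp_all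

theorem List.find?_finRange_le {T c : ℕ} (h : c < T) :
    (List.finRange T).find? (fun k => decide (c ≤ k.val)) = some ⟨c, h⟩ := by
  rw [List.find?_eq_some_iff_getElem]
  refine ⟨by simp, c, by simpa using h, by simp, fun j hj => ?_⟩
  simp [List.getElem_finRange, hj]

theorem find?_liftList {m T : ℕ} (c : Fin m → ℕ) {l : List (Fin m)} {g : Fin m}
    (h : l.find? (fun g => decide (c g < T)) = some g) :
    ∃ hg : c g < T,
      (liftList T l).find? (fun p => decide (c p.1 ≤ p.2)) = some (g, ⟨c g, hg⟩) := by
  refine ⟨by simpa using List.find?_some h, ?_⟩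
  induction l with
  | nil => simp at h
  | cons g' l ih =>
    by_cases hg' : c g' < T
    · obtain rfl : g' = g := by simpa [List.find?_cons, hg'] using h
      simp [liftList, List.find?_map, List.find?_finRange_le hg']
    · rw [List.find?_cons_of_neg (by simpa using hg')] at h
      have hnone : ((List.finRange T).map fun k => (g', k)).find?
          (fun p => decide (c p.1 ≤ p.2)) = none := by
        simp only [List.find?_eq_none, List.mem_map, decide_eq_true_eq, not_le]
        rintro _ ⟨k, -, rfl⟩
        have := k.isLt
        dsimp only
        omega
      simpa [liftList, hnone] using ih h

section ProbabilisticSerial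

theorem psTop_mem {n m : ℕ} {pref : Fin n → List (Fin m)} {S : Finset (Fin m)} {a : Fin n}
    {g : Fin m} (h : psTop pref S a = some g) : g ∈ S := by
  simpa using List.find?_some h

variable {n m : ℕ} (pref : Fin n → List (Fin m))

theorem psTop_isSome {S : Finset (Fin m)} {a : Fin n} (horder : IsOrder (pref a))
    (hS : S.Nonempty) : (psTop pref S a).isSome := by
  obtain ⟨g, hg⟩ := hS
  exact List.find?_isSome.2 ⟨g, horder.2 g, by simpa using hg⟩

theorem psN_eq_empty_of_notMem_psActive {S : Finset (Fin m)} {g : Fin m}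
    (hg : g ∉ psActive pref S) : psN pref S g = ∅ := by
  rw [← not_nonempty_iff_eq_empty]
  rintro ⟨a, ha⟩
  exact hg (mem_filter.2 ⟨psTop_mem (mem_filter.1 ha).2, a, ha⟩)

theorem psActive_nonempty (hn : 0 < n) (horder : ∀ a, IsOrder (pref a)) {S : Finset (Fin m)}
    (hS : S.Nonempty) : (psActive pref S).Nonempty := by
  obtain ⟨g, hg⟩ := Option.isSome_iff_exists.1 (psTop_isSome pref (horder ⟨0, hn⟩) hS)
  exact ⟨g, mem_filter.2 ⟨psTop_mem hg, ⟨0, hn⟩, by simp [psN, hg]⟩⟩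

/-- Time until `g` runs out at the current eating rate. -/
noncomputable def finishTime (S : Finset (Fin m)) (x : Fin n → Fin m → ℝ) (g : Fin m) : ℝ :=
  (1 - ∑ a, x a g) / #(psN pref S g)

open scoped Classical in
noncomputable def psStep (st : Finset (Fin m) × (Fin n → Fin m → ℝ) × ℝ) :
    Finset (Fin m) × (Fin n → Fin m → ℝ) × ℝ :=
  if h : (psActive pref st.1).Nonempty then
    let t := (psActive pref st.1).inf' h (finishTime pref st.1 st.2.1)
    (st.1.filter fun g => ¬(g ∈ psActive pref st.1 ∧ finishTime pref st.1 st.2.1 g = t),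
      fun a g => if psTop pref st.1 a = some g then st.2.1 a g + t else st.2.1 a g, t)
  else st

theorem psState_succ (k : ℕ) : psState pref (k + 1) = psStep pref (psState pref k) := rfl

theorem psStep_of_not_nonempty {st : Finset (Fin m) × (Fin n → Fin m → ℝ) × ℝ}
    (hA : ¬(psActive pref st.1).Nonempty) : psStep pref st = st := by
  rw [psStep, dif_neg hA]

theorem card_psStep_fst_lt {st : Finset (Fin m) × (Fin n → Fin m → ℝ) × ℝ}
    (hA : (psActive pref st.1).Nonempty) : #(psStep pref st).1 < #st.1 := by
  obtain ⟨g, hg, hmin⟩ := exists_mem_eq_inf' hA (finishTime pref st.1 st.2.1)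
  rw [psStep, dif_pos hA]
  exact card_lt_card (filter_ssubset.2 ⟨g, (mem_filter.1 hg).1, by simp [hg, hmin]⟩)

theorem card_psState_fst_le (hn : 0 < n) (horder : ∀ a, IsOrder (pref a)) (k : ℕ) :
    #(psState pref k).1 ≤ m - k := by
  induction k with
  | zero => simp [psState]
  | succ k ih =>
    rw [psState_succ]
    rcases (psState pref k).1.eq_empty_or_nonempty with hS | hS
    · have hA : ¬(psActive pref (psState pref k).1).Nonempty := by simp [psActive, hS]
      rw [psStep_of_not_nonempty pref hA, hS]
      simp
    · have := card_psStep_fst_lt pref (psActive_nonempty pref hn horder hS)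
      omega

end ProbabilisticSerial

section RoundRobin

variable {n m T : ℕ} (hn : 0 < n) (pref : Fin n → List (Fin m))

def consumed (cnt : Fin n → Fin m → ℕ) (g : Fin m) : ℕ := ∑ a, cnt a g

theorem consumed_add_ite (cnt : Fin n → Fin m → ℕ) (P : Fin n → Fin m → Prop)
    [∀ a g, Decidable (P a g)] (k : ℕ) (g : Fin m) :
    consumed (fun a g => cnt a g + if P a g then k else 0) g
      = consumed cnt g + #{a | P a g} * k := by
  simp [consumed, sum_add_distrib, sum_ite]

theorem consumed_add_psTop (cnt : Fin n → Fin m → ℕ) (S : Finset (Fin m)) (q : ℕ) (g : Fin m) :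
    consumed (fun a g => cnt a g + if psTop pref S a = some g then q else 0) g
      = consumed cnt g + q * #(psN pref S g) := by
  rw [consumed_add_ite, mul_comm]
  rfl

structure RRLiftedCounts (T : ℕ) (cnt : Fin n → Fin m → ℕ) (s : ℕ) : Prop where
  mem_remaining_iff : ∀ p : Fin m × Fin T,
    p ∈ (rrState n hn (fun b => liftList T (pref b)) s).1 ↔ consumed cnt p.1 ≤ p.2
  card_filter_bundle : ∀ a g,
    #((rrState n hn (fun b => liftList T (pref b)) s).2 a |>.filter fun p => p.1 = g)
      = cnt a g
  disjoint_bundle : ∀ a, Disjoint ((rrState n hn (fun b => liftList T (pref b)) s).2 a)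
    (rrState n hn (fun b => liftList T (pref b)) s).1
  sum_consumed : ∑ g, consumed cnt g = s

theorem rrLiftedCounts_zero : RRLiftedCounts hn pref T 0 0 where
  mem_remaining_iff p := by simp [rrState, consumed]
  card_filter_bundle a g := by simp [rrState]
  disjoint_bundle a := by simp [rrState]
  sum_consumed := by simp [consumed]

variable {hn pref}

theorem RRLiftedCounts.succ {cnt : Fin n → Fin m → ℕ} {s : ℕ}
    (h : RRLiftedCounts hn pref T cnt s) {i : Fin n} (hi : (i : ℕ) = s % n) {g₀ : Fin m}
    (hpick : (pref i).find? (fun g => decide (consumed cnt g < T)) = some g₀) :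
    RRLiftedCounts hn pref T (fun a g => cnt a g + if a = i ∧ g = g₀ then 1 else 0)
      (s + 1) := by
  obtain ⟨hlt, hfind⟩ := find?_liftList (consumed cnt) hpick
  obtain ⟨hrem, hcard, hdisj, hsum⟩ := h
  set st := rrState n hn (fun b => liftList T (pref b)) s with hst
  set p₀ : Fin m × Fin T := (g₀, ⟨consumed cnt g₀, hlt⟩)
  have hstep : rrState n hn (fun b => liftList T (pref b)) (s + 1)
      = (st.1.erase p₀, Function.update st.2 i (insert p₀ (st.2 i))) := by
    have hmem : (fun p => decide (p ∈ st.1)) = fun p => decide (consumed cnt p.1 ≤ p.2) :=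
      funext fun p => decide_eq_decide.2 (hrem p)
    have hagent : (⟨s % n, Nat.mod_lt s hn⟩ : Fin n) = i := Fin.ext hi.symm
    simp only [rrState, ← hst, hmem, hagent, hfind]
  have hconsumed : ∀ g, consumed (fun a g => cnt a g + if a = i ∧ g = g₀ then 1 else 0) g
      = consumed cnt g + if g = g₀ then 1 else 0 := fun g => by
    rw [consumed_add_ite]
    by_cases hg : g = g₀ <;> simp [hg, filter_eq']
  have hp₀ : p₀ ∈ st.1 := (hrem p₀).2 le_rfl
  constructor
  · rintro ⟨g, k⟩
    rw [hstep]
    simp only [mem_erase, hrem, hconsumed]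
    by_cases hg : g = g₀
    · subst hg
      simp only [ne_eq, Prod.mk.injEq, Fin.ext_iff, true_and, ↓reduceIte, p₀]
      omega
    · simp [p₀, hg]
  · intro a g
    rw [hstep]
    by_cases ha : a = i
    · subst ha
      simp only [Function.update_self]
      by_cases hg : g = g₀
      · subst hg
        rw [filter_insert, if_pos (rfl : p₀.1 = g), card_insert_of_notMem fun hp =>
          disjoint_left.1 (hdisj a) (mem_filter.1 hp).1 hp₀, hcard]
        simp
      · rw [filter_insert, if_neg (show ¬p₀.1 = g from fun h' => hg h'.symm)]
        simp [hcard, hg]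
    · simp [hcard, ha]
  · intro a
    rw [hstep]
    by_cases ha : a = i
    · subst ha
      simpa [disjoint_insert_left] using (hdisj a).mono_right (erase_subset _ _)
    · simpa [Function.update_of_ne ha] using (hdisj a).mono_right (erase_subset _ _)
  · simp [hconsumed, sum_add_distrib, hsum]

theorem RRLiftedCounts.round {S : Finset (Fin m)} {cnt : Fin n → Fin m → ℕ} {r : ℕ}
    (h : RRLiftedCounts hn pref T cnt (n * r)) (htop : ∀ a, (psTop pref S a).isSome)
    (hexhausted : ∀ g ∉ S, T ≤ consumed cnt g)
    (hbound : ∀ g ∈ S, consumed cnt g + #(psN pref S g) ≤ T) :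
    ∀ j ≤ n, RRLiftedCounts hn pref T
      (fun a g => cnt a g + if psTop pref S a = some g ∧ (a : ℕ) < j then 1 else 0)
      (n * r + j) := by
  intro j
  induction j with
  | zero => intro; simpa using h
  | succ j ih =>
    intro hj
    set i : Fin n := ⟨j, hj⟩
    obtain ⟨g₀, hg₀⟩ := Option.isSome_iff_exists.1 (htop i)
    set cnt' := fun a g => cnt a g + if psTop pref S a = some g ∧ (a : ℕ) < j then 1 else 0
    have hmono : ∀ g, consumed cnt g ≤ consumed cnt' g := fun g =>
      sum_le_sum fun a _ => Nat.le_add_right _ _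
    have hlt : consumed cnt' g₀ < T := by
      have hsub : ({a | psTop pref S a = some g₀ ∧ (a : ℕ) < j} : Finset (Fin n))
          ⊂ psN pref S g₀ :=
        (ssubset_iff_of_subset fun a ha => by simp_all [psN]).2
          ⟨i, by simp [psN, hg₀], by simp [i]⟩
      have := card_lt_card hsub
      have := hbound g₀ (psTop_mem hg₀)
      simp only [cnt', consumed_add_ite, mul_one]
      omega
    have hpick : (pref i).find? (fun g => decide (consumed cnt' g < T)) = some g₀ :=
      List.find?_eq_some_of_imp hg₀ (by simpa using hlt) fun g hg => by
        by_contra hgS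
        have := hexhausted g (by simpa using hgS)
        have := hmono g
        simp only [decide_eq_true_eq] at hg
        omega
    have hi : (i : ℕ) = (n * r + j) % n := by rw [Nat.mul_add_mod, Nat.mod_eq_of_lt hj]
    rw [← Nat.add_assoc]
    convert (ih (by omega)).succ hi hpick using 3 with a g
    by_cases ha : a = i
    · subst ha
      by_cases hg : g₀ = g <;> simp [cnt', hg₀, hg, i, eq_comm]
    · have : (a : ℕ) < j + 1 ↔ (a : ℕ) < j := by
        have : (a : ℕ) ≠ j := fun h' => ha (Fin.ext h')
        omega
      simp [cnt', ha, this]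

theorem RRLiftedCounts.rounds {S : Finset (Fin m)} {cnt : Fin n → Fin m → ℕ} {r q : ℕ}
    (h : RRLiftedCounts hn pref T cnt (n * r)) (htop : ∀ a, (psTop pref S a).isSome)
    (hexhausted : ∀ g ∉ S, T ≤ consumed cnt g)
    (hbound : ∀ g ∈ S, consumed cnt g + q * #(psN pref S g) ≤ T) :
    RRLiftedCounts hn pref T (fun a g => cnt a g + if psTop pref S a = some g then q else 0)
      (n * (r + q)) := by
  induction q with
  | zero => simpa using h
  | succ q ih =>
    have hq := ih fun g hg => le_trans (by gcongr; omega) (hbound g hg)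
    have hconsumed := consumed_add_psTop pref cnt S q
    have hround := hq.round htop
      (fun g hg => (hexhausted g hg).trans (hconsumed g ▸ Nat.le_add_right _ _))
      (fun g hg => by rw [hconsumed]; linarith [hbound g hg]) n le_rfl
    rw [show n * (r + (q + 1)) = n * (r + q) + n by ring]
    convert hround using 3 with a g
    split_ifs <;> simp_all [a.isLt, Nat.add_assoc]

end RoundRobin

section Correspondence

variable {n m T : ℕ} {hn : 0 < n} {pref : Fin n → List (Fin m)}

/-- The PS state `st` is the Round-Robin state after `r` full rounds on the lifted profile,
scaled by `1 / T`. The divisibility field is what makes the next PS step an integral number of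
rounds. -/
structure PSMatchesRR (hn : 0 < n) (pref : Fin n → List (Fin m)) (T : ℕ)
    (st : Finset (Fin m) × (Fin n → Fin m → ℝ) × ℝ) (r : ℕ) (cnt : Fin n → Fin m → ℕ) :
    Prop where
  alloc_eq : ∀ a g, st.2.1 a g = cnt a g / T
  lifted : RRLiftedCounts hn pref T cnt (n * r)
  consumed_eq : ∀ g ∉ st.1, consumed cnt g = T
  consumed_lt : ∀ g ∈ st.1, consumed cnt g < T
  pow_dvd : ∀ g ∈ st.1, n.factorial ^ #st.1 ∣ T - consumed cnt g

theorem psMatchesRR_zero (hT : n.factorial ^ m ∣ T) (hT0 : 0 < T) :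
    PSMatchesRR hn pref T (psState pref 0) 0 0 where
  alloc_eq a g := by simp [psState]
  lifted := by simpa using rrLiftedCounts_zero hn pref
  consumed_eq g hg := by simp [psState] at hg
  consumed_lt g _ := by simpa [consumed] using hT0
  pow_dvd g _ := by simpa [psState, consumed] using hT

variable {st : Finset (Fin m) × (Fin n → Fin m → ℝ) × ℝ} {r : ℕ} {cnt : Fin n → Fin m → ℕ}

theorem PSMatchesRR.finishTime_eq (h : PSMatchesRR hn pref T st r cnt) (hT : 0 < T)
    (g : Fin m) :
    finishTime pref st.1 st.2.1 g = ((T : ℝ) - consumed cnt g) / #(psN pref st.1 g) / T := by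
  have hsum : ∑ a, st.2.1 a g = (consumed cnt g : ℝ) / T := by
    simp [h.alloc_eq, consumed, sum_div]
  rw [finishTime, hsum]
  field_simp

theorem PSMatchesRR.div_le_finishTime_iff (h : PSMatchesRR hn pref T st r cnt) (hT : 0 < T)
    {g : Fin m} (hg : g ∈ psActive pref st.1) (q : ℕ) :
    (q : ℝ) / T ≤ finishTime pref st.1 st.2.1 g ↔ consumed cnt g + q * #(psN pref st.1 g) ≤ T := by
  have hd : (0 : ℝ) < #(psN pref st.1 g) := by exact_mod_cast card_pos.2 (mem_filter.1 hg).2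
  rw [h.finishTime_eq hT, div_le_div_iff_of_pos_right (by positivity), le_div_iff₀ hd,
    le_sub_iff_add_le']
  exact_mod_cast Iff.rfl

theorem PSMatchesRR.div_eq_finishTime_iff (h : PSMatchesRR hn pref T st r cnt) (hT : 0 < T)
    {g : Fin m} (hg : g ∈ psActive pref st.1) (q : ℕ) :
    (q : ℝ) / T = finishTime pref st.1 st.2.1 g ↔ consumed cnt g + q * #(psN pref st.1 g) = T := by
  have hd : (0 : ℝ) < #(psN pref st.1 g) := by exact_mod_cast card_pos.2 (mem_filter.1 hg).2
  rw [h.finishTime_eq hT, div_left_inj' (by positivity), eq_div_iff hd.ne', eq_sub_iff_add_eq']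
  exact_mod_cast Iff.rfl

theorem PSMatchesRR.exists_inf'_finishTime_eq (h : PSMatchesRR hn pref T st r cnt)
    (hA : (psActive pref st.1).Nonempty) :
    ∃ q : ℕ, (psActive pref st.1).inf' hA (finishTime pref st.1 st.2.1) = q / T ∧
      n.factorial ^ (#st.1 - 1) ∣ q := by
  obtain ⟨g, hg, hmin⟩ := exists_mem_eq_inf' hA (finishTime pref st.1 st.2.1)
  have hgS := (mem_filter.1 hg).1
  have hlt := h.consumed_lt g hgS
  obtain ⟨f, hf⟩ : #(psN pref st.1 g) ∣ n.factorial :=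
    Nat.dvd_factorial (card_pos.2 (mem_filter.1 hg).2) ((card_le_univ _).trans (by simp))
  obtain ⟨e, he⟩ := h.pow_dvd g hgS
  have hpow : n.factorial ^ #st.1 = n.factorial ^ (#st.1 - 1) * n.factorial := by
    rw [← pow_succ, Nat.sub_add_cancel (card_pos.2 ⟨g, hgS⟩)]
  have hrest : T - consumed cnt g = n.factorial ^ (#st.1 - 1) * f * e * #(psN pref st.1 g) := by
    rw [he, hpow, hf]
    ring
  refine ⟨n.factorial ^ (#st.1 - 1) * f * e, ?_, mul_assoc (n.factorial ^ _) f e ▸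
    dvd_mul_right _ _⟩
  rw [hmin, eq_comm, h.div_eq_finishTime_iff (by omega) hg, ← hrest]
  omega

theorem PSMatchesRR.add_mul_card_psN_le (h : PSMatchesRR hn pref T st r cnt) (hT : 0 < T)
    {hA : (psActive pref st.1).Nonempty} {q : ℕ}
    (ht : (psActive pref st.1).inf' hA (finishTime pref st.1 st.2.1) = q / T)
    {g : Fin m} (hg : g ∈ st.1) : consumed cnt g + q * #(psN pref st.1 g) ≤ T := by
  by_cases hact : g ∈ psActive pref st.1
  · exact (h.div_le_finishTime_iff hT hact q).1 (ht ▸ inf'_le _ hact)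
  · simpa [psN_eq_empty_of_notMem_psActive pref hact] using (h.consumed_lt g hg).le

theorem PSMatchesRR.mem_psStep_fst_iff (h : PSMatchesRR hn pref T st r cnt) (hT : 0 < T)
    {hA : (psActive pref st.1).Nonempty} {q : ℕ}
    (ht : (psActive pref st.1).inf' hA (finishTime pref st.1 st.2.1) = q / T) (g : Fin m) :
    g ∈ (psStep pref st).1 ↔ g ∈ st.1 ∧ consumed cnt g + q * #(psN pref st.1 g) < T := by
  rw [psStep, dif_pos hA]
  simp only [mem_filter, ht]
  by_cases hact : g ∈ psActive pref st.1
  · rw [eq_comm, h.div_eq_finishTime_iff hT hact q]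
    exact and_congr_right fun hg => by
      simp [hact, lt_iff_le_and_ne, h.add_mul_card_psN_le hT ht hg]
  · simpa [hact, psN_eq_empty_of_notMem_psActive pref hact] using h.consumed_lt g

theorem PSMatchesRR.exists_psStep (h : PSMatchesRR hn pref T st r cnt)
    (horder : ∀ a, IsOrder (pref a)) :
    ∃ r' cnt', PSMatchesRR hn pref T (psStep pref st) r' cnt' := by
  by_cases hA : (psActive pref st.1).Nonempty
  swap
  · rw [psStep_of_not_nonempty pref hA]
    exact ⟨r, cnt, h⟩
  obtain ⟨q, ht, hq⟩ := h.exists_inf'_finishTime_eq hA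
  have hSne : st.1.Nonempty := hA.mono (filter_subset _ _)
  have hT : 0 < T := by
    obtain ⟨g, hg⟩ := hSne
    exact (Nat.zero_le _).trans_lt (h.consumed_lt g hg)
  have hbound : ∀ g ∈ st.1, consumed cnt g + q * #(psN pref st.1 g) ≤ T :=
    fun _ => h.add_mul_card_psN_le hT ht
  have hmem := h.mem_psStep_fst_iff hT ht
  set cnt' := fun a g => cnt a g + if psTop pref st.1 a = some g then q else 0
  have hconsumed := consumed_add_psTop pref cnt st.1 q
  refine ⟨r + q, cnt', ⟨fun a g => ?_, ?_, fun g hg => ?_, fun g hg => ?_, fun g hg => ?_⟩⟩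
  · rw [psStep, dif_pos hA]
    dsimp only
    rw [ht]
    split_ifs with htop <;> simp [cnt', htop, h.alloc_eq, add_div]
  · exact h.lifted.rounds (fun a => psTop_isSome pref (horder a) hSne)
      (fun g hg => (h.consumed_eq g hg).ge) hbound
  · rw [hconsumed]
    by_cases hgS : g ∈ st.1
    · have := hbound g hgS
      have := mt (hmem g).2 hg
      simp only [hgS, true_and, not_lt] at this
      omega
    · rw [psN_eq_empty_of_notMem_psActive pref fun h' => hgS (mem_filter.1 h').1]
      simpa using h.consumed_eq g hgS
  · rw [hconsumed]
    exact ((hmem g).1 hg).2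
  · obtain ⟨hgS, -⟩ := (hmem g).1 hg
    have hcard := card_psStep_fst_lt pref hA
    have hrest : n.factorial ^ (#st.1 - 1) ∣ T - consumed cnt g :=
      (pow_dvd_pow _ (Nat.sub_le _ _)).trans (h.pow_dvd g hgS)
    rw [hconsumed, Nat.sub_add_eq]
    exact (pow_dvd_pow _ (by omega)).trans (Nat.dvd_sub hrest (hq.mul_right _))

theorem exists_psMatchesRR_psState (hn : 0 < n) (horder : ∀ a, IsOrder (pref a))
    (hT : n.factorial ^ m ∣ T) (hT0 : 0 < T) (k : ℕ) :
    ∃ r cnt, PSMatchesRR hn pref T (psState pref k) r cnt := by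
  induction k with
  | zero => exact ⟨0, 0, psMatchesRR_zero hT hT0⟩
  | succ k ih =>
    obtain ⟨r, cnt, h⟩ := ih
    rw [psState_succ]
    exact h.exists_psStep horder

end Correspondence

/-- Probabilistic Serial equals Round-Robin on the lifted instance
with `T = (n!)^m` indivisible copies of each good. -/
theorem stmt10 (n m : ℕ) (hn : 0 < n) (pref : Fin n → List (Fin m))
    (horder : ∀ a, IsOrder (pref a)) :
    ∀ (a : Fin n) (g : Fin m),
      psAlloc pref a g =
        (((rr n hn (fun b => liftList (n.factorial ^ m) (pref b)) a).filter
            (fun q => q.1 = g)).card : ℝ) / ((n.factorial : ℝ) ^ m) := by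
  intro a g
  obtain ⟨r, cnt, h⟩ := exists_psMatchesRR_psState hn horder dvd_rfl
    (pow_pos (Nat.factorial_pos n) m) m
  have hempty : (psState pref m).1 = ∅ := by
    simpa using card_psState_fst_le pref hn horder m
  have hstages : Fintype.card (Fin m × Fin (n.factorial ^ m)) = n * r := by
    rw [← h.lifted.sum_consumed]
    simp [h.consumed_eq, hempty]
  rw [psAlloc, h.alloc_eq, rr, hstages, h.lifted.card_filter_bundle]
  push_cast
  rfl
end

section
/- Group incentive ratio upper bound for Round-Robin: for every coalition size c ≥ 1 the following holds. Let there be n agents and m indivisible goods, let v_1, …, v_n be additive valuations, let ≻ be a profile of strict orderings with v_a consistent with ≻_a for every a, let C ⊆ [n] be a coalition with |C| ≤ c, and let ≻'_C be manipulated orderings reported by the agents in C. Then there exists an agent a ∈ C such that v_a(RR_a(≻'_C, ≻_{−C})) ≤ (c + 1)·v_a(RR_a(≻)). -/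
/-!
Let `a` be the member of the coalition `C` with the smallest index, so that in every round `a`
moves before every other member of `C`. Compare the truthful run with the manipulated one. A
coalition move adds at most one good to the set of goods still available in the manipulated run
but already gone in the truthful run, and an honest move never enlarges that set, because the
honest agent takes the best available good with respect to the same list in both runs. So when
`a` takes his `k`-th good `p_k` in the truthful run, which is the most valuable good then left,
this set has at most `|C| k` elements, and `a` has taken at most `k` goods in the manipulated run.
Hence at most `(|C| + 1) k` goods of `a`'s manipulated bundle are worth more than `p_k`: the
`j`-th most valuable of them is worth at most `v_a(p_⌊j/(c+1)⌋)`, and summing over `j` gives the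
bound `(c + 1) ∑_k v_a(p_k) ≤ (c + 1) v_a(RR_a(≻))`.
-/

open Finset

theorem sum_le_sum_range_div_of_card_filter_lt_le {α : Type*} [DecidableEq α]
    (s : Finset α) (f : α → ℝ) (u : ℕ → ℝ) (q : ℕ)
    (h : ∀ k, q * k < #s → #{x ∈ s | u k < f x} ≤ q * k) :
    ∑ x ∈ s, f x ≤ ∑ j ∈ range #s, u (j / q) := by
  induction s using Finset.induction_on_min_value f with
  | empty => simp
  | insert a s ha hmin ih =>
    have hcard : #(insert a s) = #s + 1 := card_insert_of_notMem ha
    rw [hcard] at h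
    rw [sum_insert ha, hcard, sum_range_succ, add_comm (f a)]
    gcongr
    · refine ih fun k hk => (card_le_card (filter_subset_filter _ (subset_insert a s))).trans ?_
      exact h k (by omega)
    · -- `a` is the least valuable element, so if it beat `u (#s / q)`, all `#s + 1` would.
      by_contra! hlt
      have hall : {x ∈ insert a s | u (#s / q) < f x} = insert a s :=
        filter_true_of_mem fun x hx => by
          rcases mem_insert.1 hx with rfl | hx
          exacts [hlt, hlt.trans_le (hmin x hx)]
      have hdiv := Nat.mul_div_le #s q
      have := h (#s / q) (by omega)
      rw [hall, hcard] at this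
      omega

theorem sum_range_div_le_mul_sum {u : ℕ → ℝ} {N q : ℕ} (hu : ∀ k < N, 0 ≤ u k) (hq : 0 < q) :
    ∑ j ∈ range N, u (j / q) ≤ q * ∑ k ∈ range N, u k := by
  have hmaps : ∀ j ∈ range N, j / q ∈ range N := fun j hj =>
    mem_range.2 ((Nat.div_le_self j q).trans_lt (mem_range.1 hj))
  rw [← sum_fiberwise_of_maps_to' hmaps, mul_sum]
  gcongr with k hk
  rw [sum_const, nsmul_eq_mul]
  gcongr
  · exact hu k (mem_range.1 hk)
  · have hfiber : #{j ∈ range N | j / q = k} ≤ #(range q) := by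
      refine card_le_card_of_injOn (· % q) (fun j _ => mem_range.2 (Nat.mod_lt j hq)) ?_
      intro i hi j hj hij
      have hi' := Nat.div_add_mod i q
      have hj' := Nat.div_add_mod j q
      simp only [coe_filter, Set.mem_ofPred_eq] at hi hj
      simp only at hij
      rw [hi.2, hij] at hi'
      rw [hj.2] at hj'
      omega
    exact_mod_cast hfiber.trans (card_range q).le

theorem List.idxOf_le_idxOf_of_find?_eq_some {γ : Type*} [DecidableEq γ] {l : List γ}
    {p : γ → Bool} {g g' : γ} (h : l.find? p = some g) (hp : p g' = true) (hg' : g' ∈ l) :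
    l.idxOf g ≤ l.idxOf g' := by
  induction l with
  | nil => simp at h
  | cons x l ih =>
    by_cases hx : p x
    · rw [List.find?_cons_of_pos hx] at h
      cases h
      simp
    · rw [List.find?_cons_of_neg hx] at h
      have hgx : x ≠ g := by rintro rfl; simp [List.find?_some h] at hx
      have hg'x : x ≠ g' := by rintro rfl; simp [hp] at hx
      rw [List.idxOf_cons_ne _ hgx, List.idxOf_cons_ne _ hg'x]
      exact Nat.succ_le_succ (ih h (List.mem_of_ne_of_mem hg'x.symm hg'))

theorem Finset.card_erase_sdiff_erase_le {γ : Type*} [DecidableEq γ] (X Y : Finset γ) (g g' : γ) :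
    #(Y.erase g' \ X.erase g) ≤ #(Y \ X) + 1 :=
  (card_le_card fun x => by simp only [mem_sdiff, mem_erase, mem_insert]; tauto).trans
    (card_insert_le g (Y \ X))

theorem Finset.card_erase_sdiff_erase_le_card_sdiff {γ β : Type*} [DecidableEq γ] [LinearOrder β]
    {f : γ → β} (hf : Function.Injective f) {X Y : Finset γ} {g g' : γ}
    (hg : ∀ x ∈ X, f g ≤ f x) (hg' : g' ∈ Y) (hg'Y : ∀ y ∈ Y, f g' ≤ f y) :
    #(Y.erase g' \ X.erase g) ≤ #(Y \ X) := by
  by_cases hgY : g ∈ Y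
  · have hg'mem : g' ∈ insert g (Y \ X) := by
      rcases eq_or_ne g' g with rfl | hne
      · exact mem_insert_self _ _
      · exact mem_insert_of_mem (mem_sdiff.2
          ⟨hg', fun hg'X => hne (hf (le_antisymm (hg'Y g hgY) (hg g' hg'X)))⟩)
    calc #(Y.erase g' \ X.erase g) ≤ #((insert g (Y \ X)).erase g') :=
          card_le_card fun x => by simp only [mem_sdiff, mem_erase, mem_insert]; tauto
      _ ≤ #(Y \ X) := by
          rw [card_erase_of_mem hg'mem]
          have := card_insert_le g (Y \ X)
          omega
  · exact card_le_card fun x hx => by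
      simp only [mem_sdiff, mem_erase] at hx ⊢
      exact ⟨hx.1.2, fun hxX => hx.2 ⟨fun hxg => hgY (hxg ▸ hx.1.2), hxX⟩⟩

namespace RoundRobin

variable {γ : Type*} [DecidableEq γ] [Fintype γ] {n : ℕ} (hn : 0 < n)

def turn (s : ℕ) : Fin n := ⟨s % n, Nat.mod_lt s hn⟩

theorem turn_mul_add (k : ℕ) (a : Fin n) : turn hn (k * n + a) = a :=
  Fin.ext (by simp [turn, Nat.add_mod, Nat.mod_eq_of_lt a.isLt])

theorem card_filter_turn_mem_le (T : Finset (Fin n)) {i : ℕ} (hT : ∀ b ∈ T, i ≤ (b : ℕ))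
    (k : ℕ) : #{t ∈ range (k * n + i) | turn hn t ∈ T} ≤ #T * k := by
  refine (card_le_card_of_injOn (t := T ×ˢ range k) (fun t => (turn hn t, t / n))
    (fun t ht => ?_) ?_).trans (by rw [card_product, card_range])
  · simp only [coe_filter, mem_range, Set.mem_ofPred_eq] at ht
    refine mem_product.2 ⟨ht.2, mem_range.2 (lt_of_not_ge fun h => ?_)⟩
    have hi : i ≤ t % n := hT _ ht.2
    have := Nat.mul_le_mul_left n h
    have := Nat.div_add_mod t n
    linarith
  · intro t₁ _ t₂ _ h
    simp only [Prod.ext_iff, turn, Fin.ext_iff] at h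
    have h₁ := Nat.div_add_mod t₁ n
    have h₂ := Nat.div_add_mod t₂ n
    rw [h.1, h.2] at h₁
    omega

theorem card_filter_turn_eq_le (k : ℕ) (a : Fin n) :
    #{t ∈ range (k * n + a) | turn hn t = a} ≤ k := by
  simpa using card_filter_turn_mem_le hn {a} (by simp) k

variable (pref : Fin n → List γ)

def remaining (s : ℕ) : Finset γ := (rrState n hn pref s).1

def bundle (s : ℕ) : Fin n → Finset γ := (rrState n hn pref s).2

variable {pref} (hpref : ∀ a g, g ∈ pref a)
include hpref

theorem rrState_succ_cases (s : ℕ) :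
    (remaining hn pref s = ∅ ∧ rrState n hn pref (s + 1) = rrState n hn pref s) ∨
    ∃ g ∈ remaining hn pref s,
      (∀ g' ∈ remaining hn pref s, (pref (turn hn s)).idxOf g ≤ (pref (turn hn s)).idxOf g') ∧
      remaining hn pref (s + 1) = (remaining hn pref s).erase g ∧
      bundle hn pref (s + 1) = Function.update (bundle hn pref s) (turn hn s)
        (insert g (bundle hn pref s (turn hn s))) := by
  have hstep : rrState n hn pref (s + 1) =
      match (pref (turn hn s)).find? (fun g => decide (g ∈ remaining hn pref s)) with
      | none => rrState n hn pref s
      | some g => ((remaining hn pref s).erase g, Function.update (bundle hn pref s) (turn hn s)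
          (insert g (bundle hn pref s (turn hn s)))) := rfl
  cases hfind : (pref (turn hn s)).find? (fun g => decide (g ∈ remaining hn pref s)) with
  | none =>
    rw [hfind] at hstep
    refine .inl ⟨eq_empty_of_forall_notMem fun g hg => ?_, hstep⟩
    simpa [hg] using List.find?_eq_none.1 hfind g (hpref _ g)
  | some g =>
    rw [hfind] at hstep
    refine .inr ⟨g, by simpa using List.find?_some hfind, fun g' hg' =>
      List.idxOf_le_idxOf_of_find?_eq_some hfind (by simpa using hg') (hpref _ g'), ?_, ?_⟩
    exacts [congrArg Prod.fst hstep, congrArg Prod.snd hstep]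

theorem card_remaining (s : ℕ) : #(remaining hn pref s) = Fintype.card γ - s := by
  induction s with
  | zero => rfl
  | succ s ih =>
    rcases rrState_succ_cases hn hpref s with ⟨hempty, hstep⟩ | ⟨g, hg, -, hrem, -⟩
    · rw [hempty, card_empty] at ih
      rw [remaining, hstep, ← remaining, hempty, card_empty]
      omega
    · rw [hrem, card_erase_of_mem hg, ih, Nat.sub_sub]

theorem rrState_succ_of_card_le {s : ℕ} (hs : Fintype.card γ ≤ s) :
    rrState n hn pref (s + 1) = rrState n hn pref s := by
  rcases rrState_succ_cases hn hpref s with ⟨-, hstep⟩ | ⟨g, hg, -⟩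
  · exact hstep
  · have := card_remaining hn hpref s
    rw [Nat.sub_eq_zero_of_le hs, card_eq_zero] at this
    simp [this] at hg

theorem rrState_eq_of_card_le {s : ℕ} (hs : Fintype.card γ ≤ s) :
    rrState n hn pref s = rrState n hn pref (Fintype.card γ) := by
  induction s, hs using Nat.le_induction with
  | base => rfl
  | succ s hs ih => rw [rrState_succ_of_card_le hn hpref hs, ih]

theorem exists_pick {s : ℕ} (hs : s < Fintype.card γ) :
    ∃ g ∈ remaining hn pref s,
      (∀ g' ∈ remaining hn pref s, (pref (turn hn s)).idxOf g ≤ (pref (turn hn s)).idxOf g') ∧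
      remaining hn pref (s + 1) = (remaining hn pref s).erase g ∧
      bundle hn pref (s + 1) = Function.update (bundle hn pref s) (turn hn s)
        (insert g (bundle hn pref s (turn hn s))) := by
  refine (rrState_succ_cases hn hpref s).resolve_left fun ⟨hempty, _⟩ => ?_
  have := card_remaining hn hpref s
  rw [hempty, card_empty] at this
  omega

theorem bundle_mono (a : Fin n) : Monotone (bundle hn pref · a) := by
  refine monotone_nat_of_le_succ fun s => ?_
  rcases lt_or_ge s (Fintype.card γ) with hs | hs
  · obtain ⟨g, -, -, -, hbundle⟩ := exists_pick hn hpref hs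
    rw [hbundle, Function.update_apply]
    split_ifs with ha
    · exact ha ▸ subset_insert _ _
    · rfl
  · simp only [bundle, rrState_succ_of_card_le hn hpref hs, subset_refl]

theorem disjoint_bundle_remaining (s : ℕ) (a : Fin n) :
    Disjoint (bundle hn pref s a) (remaining hn pref s) := by
  induction s with
  | zero => exact disjoint_empty_left _
  | succ s ih =>
    rcases lt_or_ge s (Fintype.card γ) with hs | hs
    · obtain ⟨g, -, -, hrem, hbundle⟩ := exists_pick hn hpref hs
      rw [hbundle, hrem, Function.update_apply]
      split_ifs with ha
      · exact disjoint_insert_left.2 ⟨notMem_erase g _, ha ▸ ih.mono_right (erase_subset g _)⟩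
      · exact ih.mono_right (erase_subset g _)
    · simpa only [bundle, remaining, rrState_succ_of_card_le hn hpref hs] using ih

theorem bundle_union_remaining_anti (a : Fin n) :
    Antitone fun s => bundle hn pref s a ∪ remaining hn pref s := by
  refine antitone_nat_of_succ_le fun s => ?_
  rcases lt_or_ge s (Fintype.card γ) with hs | hs
  · obtain ⟨g, hg, -, hrem, hbundle⟩ := exists_pick hn hpref hs
    simp only [hbundle, hrem, Function.update_apply]
    split_ifs with ha
    · rw [insert_union, ← union_insert, insert_erase hg, ha]
    · exact union_subset_union subset_rfl (erase_subset g _)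
  · simp only [bundle, remaining, rrState_succ_of_card_le hn hpref hs, subset_refl]

theorem bundle_subset_rr (s : ℕ) (a : Fin n) : bundle hn pref s a ⊆ rr n hn pref a := by
  rcases le_total s (Fintype.card γ) with hs | hs
  · exact bundle_mono hn hpref a hs
  · rw [bundle, rrState_eq_of_card_le hn hpref hs]
    rfl

theorem rr_subset_bundle_union_remaining (s : ℕ) (a : Fin n) :
    rr n hn pref a ⊆ bundle hn pref s a ∪ remaining hn pref s := by
  rcases le_total s (Fintype.card γ) with hs | hs
  · exact subset_union_left.trans (bundle_union_remaining_anti hn hpref a hs)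
  · rw [bundle, rrState_eq_of_card_le hn hpref hs]
    exact subset_union_left

theorem card_bundle_le (s : ℕ) (a : Fin n) :
    #(bundle hn pref s a) ≤ #{t ∈ range s | turn hn t = a} := by
  induction s with
  | zero => simp [bundle, rrState]
  | succ s ih =>
    rw [range_add_one, filter_insert]
    rcases lt_or_ge s (Fintype.card γ) with hs | hs
    · obtain ⟨g, -, -, -, hbundle⟩ := exists_pick hn hpref hs
      by_cases ha : turn hn s = a
      · rw [if_pos ha, card_insert_of_notMem (by simp), hbundle, ha, Function.update_self]
        exact (card_insert_le _ _).trans (by omega)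
      · rw [if_neg ha, hbundle, Function.update_of_ne (Ne.symm ha)]
        exact ih
    · rw [bundle, rrState_succ_of_card_le hn hpref hs, ← bundle]
      exact ih.trans (card_le_card (by split_ifs; exacts [subset_insert _ _, subset_rfl]))

theorem mul_add_lt_card_of_lt_card_rr {a : Fin n} {k : ℕ} (hk : k < #(rr n hn pref a)) :
    k * n + a < Fintype.card γ := by
  by_contra! h
  refine hk.not_ge ((card_bundle_le hn hpref _ a).trans ?_)
  exact (card_le_card (filter_subset_filter _ (range_subset_range.2 h))).trans
    (card_filter_turn_eq_le hn k a)

theorem card_remaining_sdiff_le {pref' : Fin n → List γ} (hpref' : ∀ a g, g ∈ pref' a)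
    {C : Finset (Fin n)} (hhonest : ∀ a ∉ C, pref' a = pref a) (s : ℕ) :
    #(remaining hn pref' s \ remaining hn pref s) ≤ #{t ∈ range s | turn hn t ∈ C} := by
  induction s with
  | zero => simp [remaining, rrState]
  | succ s ih =>
    rw [range_add_one, filter_insert]
    rcases lt_or_ge s (Fintype.card γ) with hs | hs
    · obtain ⟨g, -, hmin, hrem, -⟩ := exists_pick hn hpref hs
      obtain ⟨g', hg', hmin', hrem', -⟩ := exists_pick hn hpref' hs
      rw [hrem, hrem']
      by_cases hC : turn hn s ∈ C
      · rw [if_pos hC, card_insert_of_notMem (by simp)]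
        exact (card_erase_sdiff_erase_le _ _ g g').trans (by omega)
      · rw [if_neg hC]
        rw [hhonest _ hC] at hmin'
        exact (card_erase_sdiff_erase_le_card_sdiff
          (fun x y hxy => (List.idxOf_inj (hpref _ x)).1 hxy) hmin hg' hmin').trans ih
    · have hempty : remaining hn pref' (s + 1) = ∅ :=
        card_eq_zero.1 (by rw [card_remaining hn hpref']; omega)
      simp [hempty]

theorem exists_pick_values (a : Fin n) {v : γ → ℝ} (hv : ∀ g, 0 ≤ v g)
    (hcons : Consistent v (pref a)) (K : ℕ) (hK : ∀ k < K, k * n + a < Fintype.card γ) :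
    ∃ u : ℕ → ℝ, (∀ k < K, 0 ≤ u k ∧ ∀ g ∈ remaining hn pref (k * n + a), v g ≤ u k) ∧
      ∑ k ∈ range K, u k ≤ ∑ g ∈ bundle hn pref (K * n + a) a, v g := by
  induction K with
  | zero => exact ⟨0, by simp, sum_nonneg fun g _ => hv g⟩
  | succ K ih =>
    obtain ⟨u, hu, hsum⟩ := ih fun k hk => hK k (by omega)
    obtain ⟨g, hg, hmin, -, hbundle⟩ := exists_pick hn hpref (hK K K.lt_succ_self)
    rw [turn_mul_add] at hmin hbundle
    have hgmax : ∀ g' ∈ remaining hn pref (K * n + a), v g' ≤ v g := fun g' hg' =>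
      not_lt.1 fun hlt => (hmin g' hg').not_gt (hcons g' g hlt)
    refine ⟨Function.update u K (v g), fun k hk => ?_, ?_⟩
    · rcases Nat.lt_succ_iff_lt_or_eq.1 hk with hk | rfl
      · rw [Function.update_of_ne hk.ne]
        exact hu k hk
      · rw [Function.update_self]
        exact ⟨hv g, hgmax⟩
    calc ∑ k ∈ range (K + 1), Function.update u K (v g) k = ∑ k ∈ range K, u k + v g := by
          rw [sum_range_succ, Function.update_self]
          congr 1
          exact sum_congr rfl fun k hk => Function.update_of_ne (mem_range.1 hk).ne _ _
      _ ≤ ∑ g' ∈ bundle hn pref (K * n + a) a, v g' + v g := by gcongr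
      _ = ∑ g' ∈ bundle hn pref (K * n + a + 1) a, v g' := by
          rw [hbundle, Function.update_self,
            sum_insert (disjoint_right.1 (disjoint_bundle_remaining hn hpref _ a) hg), add_comm]
      _ ≤ ∑ g' ∈ bundle hn pref ((K + 1) * n + a) a, v g' :=
          sum_le_sum_of_subset_of_nonneg (bundle_mono hn hpref a (by nlinarith))
            fun g _ _ => hv g

theorem card_filter_rr_lt_le {pref' : Fin n → List γ} (hpref' : ∀ a g, g ∈ pref' a)
    {C : Finset (Fin n)} (hhonest : ∀ a ∉ C, pref' a = pref a) {a : Fin n}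
    (ha : ∀ b ∈ C, (a : ℕ) ≤ b) (v : γ → ℝ) (k : ℕ) {x : ℝ}
    (hx : ∀ g ∈ remaining hn pref (k * n + a), v g ≤ x) :
    #{g ∈ rr n hn pref' a | x < v g} ≤ (#C + 1) * k := by
  set s := k * n + a
  have hsub : {g ∈ rr n hn pref' a | x < v g} ⊆
      bundle hn pref' s a ∪ (remaining hn pref' s \ remaining hn pref s) := by
    intro g hg
    rw [mem_filter] at hg
    rcases mem_union.1 (rr_subset_bundle_union_remaining hn hpref' s a hg.1) with h | h
    · exact mem_union_left _ h
    · exact mem_union_right _ (mem_sdiff.2 ⟨h, fun h' => (hx g h').not_gt hg.2⟩)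
  have hbundle : #(bundle hn pref' s a) ≤ k :=
    (card_bundle_le hn hpref' s a).trans (card_filter_turn_eq_le hn k a)
  have hdiff : #(remaining hn pref' s \ remaining hn pref s) ≤ #C * k :=
    (card_remaining_sdiff_le hn hpref hpref' hhonest s).trans (card_filter_turn_mem_le hn C ha k)
  calc _ ≤ _ := card_le_card hsub
    _ ≤ k + #C * k := (card_union_le _ _).trans (add_le_add hbundle hdiff)
    _ = (#C + 1) * k := by ring

end RoundRobin

open RoundRobin

theorem stmt14_general (c : ℕ) (n m : ℕ) (hn : 0 < n)
    (v : Fin n → Fin m → ℝ) (hv : ∀ a g, 0 ≤ v a g)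
    (pref pref' : Fin n → List (Fin m))
    (horder : ∀ a, IsOrder (pref a)) (horder' : ∀ a, IsOrder (pref' a))
    (hcons : ∀ a, Consistent (v a) (pref a))
    (C : Finset (Fin n)) (hCne : C.Nonempty) (hC : C.card ≤ c)
    (hhonest : ∀ a ∉ C, pref' a = pref a) :
    ∃ a ∈ C, (∑ g ∈ rr n hn pref' a, v a g) ≤
      ((c : ℝ) + 1) * ∑ g ∈ rr n hn pref a, v a g := by
  have hpref : ∀ a g, g ∈ pref a := fun a => (horder a).2
  have hpref' : ∀ a g, g ∈ pref' a := fun a => (horder' a).2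
  obtain ⟨a, haC, ha⟩ := C.exists_min_image (fun b => (b : ℕ)) hCne
  refine ⟨a, haC, ?_⟩
  set S' := rr n hn pref' a
  obtain ⟨u, hu, hsum⟩ := exists_pick_values hn hpref a (hv a) (hcons a) #S'
    fun k hk => mul_add_lt_card_of_lt_card_rr hn hpref' hk
  have hcount : ∀ k, (c + 1) * k < #S' → #{g ∈ S' | u k < v a g} ≤ (c + 1) * k := fun k hk =>
    (card_filter_rr_lt_le hn hpref hpref' hhonest ha (v a) k
      (hu k ((Nat.le_mul_of_pos_left k c.succ_pos).trans_lt hk)).2).trans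
      (Nat.mul_le_mul_right k (by omega))
  calc ∑ g ∈ S', v a g ≤ ∑ j ∈ range #S', u (j / (c + 1)) :=
        sum_le_sum_range_div_of_card_filter_lt_le _ _ u _ hcount
    _ ≤ ((c + 1 : ℕ) : ℝ) * ∑ k ∈ range #S', u k :=
        sum_range_div_le_mul_sum (fun k hk => (hu k hk).1) c.succ_pos
    _ ≤ ((c : ℝ) + 1) * ∑ g ∈ rr n hn pref a, v a g := by
        push_cast
        gcongr
        exact hsum.trans (sum_le_sum_of_subset_of_nonneg (bundle_subset_rr hn hpref _ a)
          fun g _ _ => hv a g)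

/-- GIR upper bound `c + 1` for Round-Robin. -/
theorem stmt14 (c : ℕ) (hc : 1 ≤ c) (n m : ℕ) (hn : 0 < n)
    (v : Fin n → Fin m → ℝ) (hv : ∀ a g, 0 ≤ v a g)
    (pref pref' : Fin n → List (Fin m))
    (horder : ∀ a, IsOrder (pref a)) (horder' : ∀ a, IsOrder (pref' a))
    (hcons : ∀ a, Consistent (v a) (pref a))
    (C : Finset (Fin n)) (hCne : C.Nonempty) (hC : C.card ≤ c)
    (hhonest : ∀ a ∉ C, pref' a = pref a) :
    ∃ a ∈ C, (∑ g ∈ rr n hn pref' a, v a g) ≤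
      ((c : ℝ) + 1) * ∑ g ∈ rr n hn pref a, v a g :=
  stmt14_general c n m hn v hv pref pref' horder horder' hcons C hCne hC hhonest
end
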